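/- arXiv:2602.16466 — 9 statements merged into one kernel-verified Lean document; each statement's English description precedes it below -/
import Mathlib

section
/- For all real t with 0 < t ≤ 1/2, one has arcsin(t) - t ≤ 4(1 - 3/π) · arcsin(t) · t². -/
/-!
Put `x = arcsin t ∈ (0, π/6]`; the claim becomes `G x ≥ 0` for
`G x = c x sin² x - (x - sin x)` with `c = 4 (1 - 3/π)`, the constant for which `G (π/6) = 0`.
For `x ≤ 0.43` this follows from `x - x³/6 ≤ sin x ≤ x`. On `[0.43, π/6]` the function `G` is
concave, because `G'' x = 2c (sin 2x + x cos 2x) - sin x` and `sin 2x + x cos 2x ≤ √(1 + x²)` by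
Cauchy–Schwarz; so there `G` stays above `min (G 0.43) (G (π/6)) ≥ 0`.
-/

open Real Set

lemma sin_add_mul_cos_le_sqrt (y z : ℝ) : sin y + z * cos y ≤ √(1 + z ^ 2) := by
  refine le_sqrt_of_sq_le ?_
  nlinarith [sq_nonneg (z * sin y - cos y), sin_sq_add_cos_sq y]

lemma lt_four_mul_one_sub_three_div_pi : 0.18028 < 4 * (1 - 3 / π) := by
  have : 3 / π < 0.95493 := by rw [div_lt_iff₀ pi_pos]; linarith [pi_gt_d6]
  linarith

lemma four_mul_one_sub_three_div_pi_lt : 4 * (1 - 3 / π) < 0.180282 := by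
  have : 0.9549295 < 3 / π := by rw [lt_div_iff₀ pi_pos]; linarith [pi_lt_d6]
  linarith

noncomputable def sinGap (c x : ℝ) : ℝ := c * x * sin x ^ 2 - (x - sin x)

lemma hasDerivAt_sinGap (c x : ℝ) :
    HasDerivAt (sinGap c) (c * (sin x ^ 2 + x * sin (2 * x)) - 1 + cos x) x := by
  refine ((((hasDerivAt_id' x).const_mul c).mul ((hasDerivAt_sin x).pow 2)).sub
    ((hasDerivAt_id' x).sub (hasDerivAt_sin x))).congr_deriv ?_
  simp only [Pi.pow_apply, sin_two_mul]; push_cast; ring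

lemma hasDerivAt_deriv_sinGap (c x : ℝ) :
    HasDerivAt (fun x => c * (sin x ^ 2 + x * sin (2 * x)) - 1 + cos x)
      (c * (2 * sin (2 * x) + 2 * x * cos (2 * x)) - sin x) x := by
  have hsin_two_mul : HasDerivAt (fun x => sin (2 * x)) (cos (2 * x) * 2) x :=
    (hasDerivAt_sin (2 * x)).comp x (by simpa using (hasDerivAt_id' x).const_mul 2)
  refine ((((((hasDerivAt_sin x).pow 2).add ((hasDerivAt_id' x).mul hsin_two_mul)).const_mul
    c).sub_const 1).add (hasDerivAt_cos x)).congr_deriv ?_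
  rw [sin_two_mul]; push_cast; ring

lemma sinGap_nonneg_of_le {c x : ℝ} (hc : 0.18028 ≤ c) (hx₀ : 0 ≤ x) (hx : x ≤ 0.43) :
    0 ≤ sinGap c x := by
  have hsin := sin_ge_sub_cube hx₀
  have hconst : 1 ≤ 6 * c * (1 - x ^ 2 / 6) ^ 2 := by nlinarith
  have hpos : 0 ≤ x - x ^ 3 / 6 := by nlinarith
  rw [sinGap, sub_nonneg]
  calc x - sin x ≤ x ^ 3 / 6 := by linarith
    _ ≤ x ^ 3 / 6 * (6 * c * (1 - x ^ 2 / 6) ^ 2) := le_mul_of_one_le_right (by positivity) hconst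
    _ = c * x * (x - x ^ 3 / 6) ^ 2 := by ring
    _ ≤ c * x * sin x ^ 2 := by gcongr

lemma concaveOn_sinGap {c : ℝ} (hc₀ : 0 ≤ c) (hc : c ≤ 0.180282) :
    ConcaveOn ℝ (Icc 0.43 (π / 6)) (sinGap c) := by
  refine concaveOn_of_hasDerivWithinAt2_nonpos (convex_Icc _ _)
    (fun x _ => (hasDerivAt_sinGap c x).continuousAt.continuousWithinAt)
    (fun x _ => (hasDerivAt_sinGap c x).hasDerivWithinAt)
    (fun x _ => (hasDerivAt_deriv_sinGap c x).hasDerivWithinAt) ?_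
  intro x hx
  rw [interior_Icc] at hx
  have hsqrt : √(1 + x ^ 2) ≤ 1.1288 := by
    rw [sqrt_le_left (by norm_num)]
    nlinarith [hx.1, hx.2, pi_lt_d6]
  have hcauchy :=
    mul_le_mul_of_nonneg_left ((sin_add_mul_cos_le_sqrt (2 * x) x).trans hsqrt) hc₀
  have hsin : 0.41 < sin x := calc
    (0.41 : ℝ) < 0.43 - 0.43 ^ 3 / 6 := by norm_num
    _ ≤ sin 0.43 := sin_ge_sub_cube (by norm_num)
    _ ≤ sin x := sin_le_sin_of_le_of_le_pi_div_two (by linarith [pi_pos])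
      (by linarith [hx.2, pi_pos]) hx.1.le
  nlinarith

lemma sinGap_pi_div_six : sinGap (4 * (1 - 3 / π)) (π / 6) = 0 := by
  rw [sinGap, sin_pi_div_six]
  field_simp
  ring

lemma sinGap_nonneg {x : ℝ} (hx : x ∈ Icc 0 (π / 6)) : 0 ≤ sinGap (4 * (1 - 3 / π)) x := by
  have hc := lt_four_mul_one_sub_three_div_pi
  rcases le_or_gt x 0.43 with hx_le | hx_gt
  · exact sinGap_nonneg_of_le hc.le hx.1 hx_le
  have hsplit : (0.43 : ℝ) ≤ π / 6 := by linarith [pi_gt_d2]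
  calc 0 ≤ min (sinGap (4 * (1 - 3 / π)) 0.43) (sinGap (4 * (1 - 3 / π)) (π / 6)) := by
        rw [sinGap_pi_div_six]
        exact le_min (sinGap_nonneg_of_le hc.le (by norm_num) le_rfl) le_rfl
    _ ≤ sinGap (4 * (1 - 3 / π)) x :=
        (concaveOn_sinGap (by linarith) four_mul_one_sub_three_div_pi_lt.le).min_le_of_mem_Icc
          (left_mem_Icc.2 hsplit) (right_mem_Icc.2 hsplit) ⟨hx_gt.le, hx.2⟩

theorem arcsin_sub_le_four_one_sub_three_div_pi (t : ℝ) (ht0 : 0 < t) (ht1 : t ≤ 1/2) :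
    Real.arcsin t - t ≤ 4 * (1 - 3 / Real.pi) * Real.arcsin t * t ^ 2 := by
  have ht : t ∈ Icc (-1) 1 := ⟨by linarith, by linarith⟩
  have hx : arcsin t ∈ Icc 0 (π / 6) := by
    refine ⟨arcsin_nonneg.2 ht0.le, ?_⟩
    rw [arcsin_le_iff_le_sin ht ⟨by linarith [pi_pos], by linarith [pi_pos]⟩, sin_pi_div_six]
    exact ht1
  have h := sinGap_nonneg hx
  rw [sinGap, sin_arcsin ht.1 ht.2] at h
  linarith
end

section
/- For all real t with 0 < t ≤ 1/2, one has arcsin(t) - t ≤ 4(π/3 - 1) · t³. -/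
/-!
Substituting `x = sin θ`, the inequality `3 (arcsin x - x) ≤ x (1 / √(1 - x²) - 1)` becomes
`3θ ≤ 2 sin θ + tan θ`, which holds because the derivative `2 cos θ + 1 / cos² θ` of the right-hand
side is at least `3` by AM-GM. This inequality says exactly that the derivative of
`(arcsin t - t) / t³` is nonnegative, so this quotient is increasing on `(0, 1]`; its value at
`t = 1/2` is `8 (π/6 - 1/2) = 4 (π/3 - 1)`.
-/

open Real Set

lemma three_le_two_mul_add_inv_sq {c : ℝ} (hc : 0 < c) : 3 ≤ 2 * c + (c ^ 2)⁻¹ := by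
  have h : 2 * c + (c ^ 2)⁻¹ - 3 = (c - 1) ^ 2 * (2 * c + 1) / c ^ 2 := by
    field_simp
    ring
  rw [← sub_nonneg, h]
  positivity

lemma monotoneOn_two_mul_sin_add_tan_sub_three_mul :
    MonotoneOn (fun θ => 2 * sin θ + tan θ - 3 * θ) (Ico 0 (π / 2)) := by
  have hderiv : ∀ θ ∈ Ico 0 (π / 2), HasDerivAt (fun θ => 2 * sin θ + tan θ - 3 * θ)
      (2 * cos θ + 1 / cos θ ^ 2 - 3 * 1) θ := fun θ hθ => by
    have hcos : cos θ ≠ 0 := (cos_pos_of_mem_Ioo ⟨by linarith [hθ.1, pi_pos], hθ.2⟩).ne'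
    exact (((hasDerivAt_sin θ).const_mul 2).add (hasDerivAt_tan hcos)).sub
      ((hasDerivAt_id' θ).const_mul 3)
  refine monotoneOn_of_hasDerivWithinAt_nonneg (convex_Ico 0 (π / 2))
    (fun θ hθ => (hderiv θ hθ).continuousAt.continuousWithinAt)
    (fun θ hθ => (hderiv θ (interior_subset hθ)).hasDerivWithinAt) fun θ hθ => ?_
  rw [interior_Ico] at hθ
  have hcos : 0 < cos θ := cos_pos_of_mem_Ioo ⟨by linarith [hθ.1, pi_pos], hθ.2⟩
  have := three_le_two_mul_add_inv_sq hcos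
  rw [one_div]
  linarith

lemma three_mul_arcsin_sub_le {x : ℝ} (hx0 : 0 ≤ x) (hx1 : x < 1) :
    3 * (arcsin x - x) ≤ x * ((√(1 - x ^ 2))⁻¹ - 1) := by
  have hθ : arcsin x ∈ Ico 0 (π / 2) := ⟨arcsin_nonneg.2 hx0, arcsin_lt_pi_div_two.2 hx1⟩
  have h := monotoneOn_two_mul_sin_add_tan_sub_three_mul ⟨le_rfl, by positivity⟩ hθ hθ.1
  simp only [sin_zero, tan_zero, sin_arcsin (by linarith) hx1.le, tan_arcsin] at h
  rw [div_eq_mul_inv] at h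
  linarith

lemma monotoneOn_arcsin_sub_div_pow_three :
    MonotoneOn (fun t => (arcsin t - t) / t ^ 3) (Ioc 0 1) := by
  have hderiv : ∀ t ∈ Ioo (0 : ℝ) 1, HasDerivAt (fun t => (arcsin t - t) / t ^ 3)
      (t ^ 2 * (t * ((√(1 - t ^ 2))⁻¹ - 1) - 3 * (arcsin t - t)) / (t ^ 3) ^ 2) t :=
    fun t ht => by
      refine (((hasDerivAt_arcsin (by linarith [ht.1]) ht.2.ne).fun_sub (hasDerivAt_id' t)).fun_div
        (hasDerivAt_pow 3 t) (pow_pos ht.1 3).ne').congr_deriv ?_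
      norm_num
      ring
  refine monotoneOn_of_hasDerivWithinAt_nonneg (convex_Ioc 0 1)
    ((continuous_arcsin.sub continuous_id).continuousOn.div (continuous_pow 3).continuousOn
      fun t ht => (pow_pos ht.1 3).ne')
    (fun t ht => (hderiv t (by rwa [interior_Ioc] at ht)).hasDerivWithinAt) fun t ht => ?_
  rw [interior_Ioc] at ht
  have := three_mul_arcsin_sub_le ht.1.le ht.2
  exact div_nonneg (mul_nonneg (sq_nonneg t) (by linarith)) (sq_nonneg _)

lemma arcsin_one_half : arcsin (1 / 2) = π / 6 := by
  rw [← sin_pi_div_six, arcsin_sin] <;> linarith [pi_pos]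

theorem arcsin_sub_le_four_pi_div_three_sub_one (t : ℝ) (ht0 : 0 < t) (ht1 : t ≤ 1/2) :
    Real.arcsin t - t ≤ 4 * (Real.pi / 3 - 1) * t ^ 3 := by
  have h := monotoneOn_arcsin_sub_div_pow_three ⟨ht0, by linarith⟩ ⟨by norm_num, by norm_num⟩ ht1
  simp only at h
  have hhalf : (arcsin (1 / 2) - 1 / 2) / (1 / 2 : ℝ) ^ 3 = 4 * (π / 3 - 1) := by
    rw [arcsin_one_half]
    ring
  rwa [hhalf, div_le_iff₀ (by positivity)] at h
end

section
/- For all real t with 0 < t ≤ 1/2, one has arcsin(t) - t ≤ (1/8)(arcsin(2t) - 2t). -/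
/-!
Let `g x = arcsin x - x`, so `g' x = 1 / √(1 - x²) - 1 = x² / (s (1 + s))` with `s = √(1 - x²)`.
Since `s` decreases in `|x|`, this gives `c² g' x ≤ g' (c x)` for `c ≥ 1`, i.e. the function
`x ↦ g (c x) - c³ g x` is nondecreasing on `[0, 1/c]`; it vanishes at `0`. Take `c = 2`.
-/

open Real Set

lemma one_div_sqrt_one_sub_sq_sub_one {y : ℝ} (hy : y ^ 2 < 1) :
    1 / √(1 - y ^ 2) - 1 = y ^ 2 / (√(1 - y ^ 2) * (1 + √(1 - y ^ 2))) := by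
  have hs : 0 < √(1 - y ^ 2) := sqrt_pos.mpr (by linarith)
  have hs2 : √(1 - y ^ 2) ^ 2 = 1 - y ^ 2 := sq_sqrt (by linarith)
  field_simp
  linear_combination -hs2

lemma sq_mul_one_div_sqrt_one_sub_sq_sub_one_le {c x : ℝ} (hc : 1 ≤ c) (hcx : (c * x) ^ 2 < 1) :
    c ^ 2 * (1 / √(1 - x ^ 2) - 1) ≤ 1 / √(1 - (c * x) ^ 2) - 1 := by
  have hx : x ^ 2 ≤ (c * x) ^ 2 := by
    rw [mul_pow]; exact le_mul_of_one_le_left (sq_nonneg x) (one_le_pow₀ hc)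
  have hcx_pos : 0 < √(1 - (c * x) ^ 2) := sqrt_pos.mpr (by linarith)
  have hsqrt_le : √(1 - (c * x) ^ 2) ≤ √(1 - x ^ 2) := sqrt_le_sqrt (by linarith)
  rw [one_div_sqrt_one_sub_sq_sub_one (hx.trans_lt hcx), one_div_sqrt_one_sub_sq_sub_one hcx,
    ← mul_div_assoc, ← mul_pow]
  gcongr

lemma hasDerivAt_arcsin_sub_self {x : ℝ} (h₁ : x ≠ -1) (h₂ : x ≠ 1) :
    HasDerivAt (fun y => arcsin y - y) (1 / √(1 - x ^ 2) - 1) x :=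
  (hasDerivAt_arcsin h₁ h₂).sub (hasDerivAt_id x)

lemma monotoneOn_arcsin_mul_sub_cube_mul_arcsin_sub {c : ℝ} (hc : 1 ≤ c) :
    MonotoneOn (fun x => (arcsin (c * x) - c * x) - c ^ 3 * (arcsin x - x)) (Icc 0 (1 / c)) := by
  have hc0 : 0 < c := by linarith
  have hmem : ∀ x ∈ interior (Icc 0 (1 / c)), 0 < x ∧ x < 1 ∧ 0 < c * x ∧ c * x < 1 := by
    intro x hx
    rw [interior_Icc, mem_Ioo, lt_div_iff₀ hc0, mul_comm] at hx
    exact ⟨hx.1, by nlinarith, mul_pos hc0 hx.1, hx.2⟩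
  refine monotoneOn_of_hasDerivWithinAt_nonneg (convex_Icc _ _) (by fun_prop)
    (f' := fun x => c * (1 / √(1 - (c * x) ^ 2) - 1) - c ^ 3 * (1 / √(1 - x ^ 2) - 1))
    (fun x hx => ?_) (fun x hx => ?_)
  · obtain ⟨hx0, hx1, hcx0, hcx1⟩ := hmem x hx
    have hcomp := (hasDerivAt_arcsin_sub_self (x := c * x) (by linarith) hcx1.ne).comp x
      ((hasDerivAt_id x).const_mul c)
    simp only [Function.comp_def, mul_one] at hcomp
    exact (hcomp.sub ((hasDerivAt_arcsin_sub_self (by linarith) hx1.ne).const_mul (c ^ 3))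
      |>.congr_deriv (by ring)).hasDerivWithinAt
  · obtain ⟨-, -, hcx0, hcx1⟩ := hmem x hx
    have key := sq_mul_one_div_sqrt_one_sub_sq_sub_one_le hc (by nlinarith : (c * x) ^ 2 < 1)
    calc (0 : ℝ) ≤ c * ((1 / √(1 - (c * x) ^ 2) - 1) - c ^ 2 * (1 / √(1 - x ^ 2) - 1)) :=
          mul_nonneg hc0.le (sub_nonneg.mpr key)
      _ = _ := by ring

theorem cube_mul_arcsin_sub_le_arcsin_mul_sub {c t : ℝ} (hc : 1 ≤ c) (ht0 : 0 ≤ t)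
    (ht1 : c * t ≤ 1) : c ^ 3 * (arcsin t - t) ≤ arcsin (c * t) - c * t := by
  have hc0 : 0 < c := by linarith
  have hmono := monotoneOn_arcsin_mul_sub_cube_mul_arcsin_sub hc
    ⟨le_rfl, by positivity⟩ ⟨ht0, by rwa [le_div_iff₀ hc0, mul_comm]⟩ ht0
  simp only [mul_zero, arcsin_zero, sub_self] at hmono
  linarith

theorem arcsin_sub_le_eighth_arcsin_double (t : ℝ) (ht0 : 0 < t) (ht1 : t ≤ 1/2) :
    Real.arcsin t - t ≤ (1/8) * (Real.arcsin (2*t) - 2*t) := by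
  have h := cube_mul_arcsin_sub_le_arcsin_mul_sub (c := 2) one_le_two ht0.le (by linarith)
  linarith
end

section
/- For all positive reals a and b, the minimum over δ ≥ 0 of |δ - a|/max(δ, a) + |δ - b|/max(δ, b) equals |a - b|/max(a, b). In particular, for every δ ≥ 0, |δ - a|/max(δ, a) + |δ - b|/max(δ, b) ≥ |a - b|/max(a, b), with equality attained (e.g., at δ = a or δ = b after checking which attains the infimum; in fact equality holds at δ = min(a,b) or δ = max(a,b)). -/
lemma aux_lb (a b δ : ℝ) (ha : 0 < a) (hb : 0 < b) (hab : a ≤ b) (hδ : 0 ≤ δ) :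
    (b - a) / b ≤ |δ - a| / max δ a + |δ - b| / max δ b := by
  rcases le_total δ a with h1 | h1
  · have hma : max δ a = a := max_eq_right h1
    have hmb : max δ b = b := max_eq_right (h1.trans hab)
    rw [hma, hmb, abs_of_nonpos (by linarith), abs_of_nonpos (by linarith)]
    rw [div_add_div _ _ (ne_of_gt ha) (ne_of_gt hb), div_le_div_iff₀ hb (by positivity)]
    nlinarith [mul_nonneg (mul_nonneg (sub_nonneg.2 h1) (by linarith : (0:ℝ) ≤ a + b)) hb.le]
  · rcases le_total δ b with h2 | h2
    · have hδpos : 0 < δ := lt_of_lt_of_le ha h1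
      have hma : max δ a = δ := max_eq_left h1
      have hmb : max δ b = b := max_eq_right h2
      rw [hma, hmb, abs_of_nonneg (by linarith), abs_of_nonpos (by linarith)]
      rw [div_add_div _ _ (ne_of_gt hδpos) (ne_of_gt hb), div_le_div_iff₀ hb (by positivity)]
      nlinarith [mul_nonneg (sub_nonneg.2 h1) (sub_nonneg.2 h2)]
    · have hδpos : 0 < δ := lt_of_lt_of_le hb h2
      have hma : max δ a = δ := max_eq_left (hab.trans h2)
      have hmb : max δ b = δ := max_eq_left h2
      rw [hma, hmb, abs_of_nonneg (by linarith), abs_of_nonneg (by linarith)]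
      rw [div_add_div _ _ (ne_of_gt hδpos) (ne_of_gt hδpos), div_le_div_iff₀ hb (by positivity)]
      nlinarith [mul_nonneg (sub_nonneg.2 h2) (sub_nonneg.2 hab), sq_nonneg δ,
        mul_nonneg (sub_nonneg.2 h2) hδ]

theorem min_sum_relative_errors (a b : ℝ) (ha : 0 < a) (hb : 0 < b) :
    IsLeast {v : ℝ | ∃ δ : ℝ, 0 ≤ δ ∧
        v = |δ - a| / max δ a + |δ - b| / max δ b}
      (|a - b| / max a b) := by
  constructor
  · exact ⟨a, ha.le, by simp⟩
  · rintro v ⟨δ, hδ, rfl⟩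
    rcases le_total a b with hab | hab
    · rw [max_eq_right hab, abs_of_nonpos (by linarith), neg_sub]
      exact aux_lb a b δ ha hb hab hδ
    · rw [max_eq_left hab, abs_of_nonneg (by linarith)]
      have := aux_lb b a δ hb ha hab hδ
      linarith
end

section
/- Let x, y ∈ ℝ^N and let γ : [0,1] → ℝ^N be a Lipschitz path from x to y parameterized with constant speed L = |γ| (i.e., ‖γ(s) - γ(t)‖ ≤ L|s - t| for all s,t, and the length of γ is L). Let γ̄(t) = (1-t)x + ty be the straight path, with length |γ̄| = ‖x - y‖. Then for every t ∈ [0,1], ‖γ(t) - γ̄(t)‖² ≤ t(1-t)(L² - ‖x-y‖²). -/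
/-!
Put `a = γ t - x` and `b = γ t - y`, so that `γ t - ((1 - t) x + t y) = (1 - t) a + t b` and
`a - b = y - x`. In an inner product space
`‖(1 - t) a + t b‖² = (1 - t) ‖a‖² + t ‖b‖² - t (1 - t) ‖a - b‖²`,
and the Lipschitz bounds at the endpoints, `‖a‖ ≤ L t` and `‖b‖ ≤ L (1 - t)`, turn the right-hand
side into at most `(1 - t) L² t² + t L² (1 - t)² - t (1 - t) ‖x - y‖² = t (1 - t) (L² - ‖x - y‖²)`.
-/

section InnerProductSpace

variable {E : Type*} [NormedAddCommGroup E] [InnerProductSpace ℝ E]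

theorem norm_one_sub_smul_add_smul_sq (a b : E) (t : ℝ) :
    ‖(1 - t) • a + t • b‖ ^ 2
      = (1 - t) * ‖a‖ ^ 2 + t * ‖b‖ ^ 2 - t * (1 - t) * ‖a - b‖ ^ 2 := by
  rw [norm_add_sq_real, norm_sub_sq_real, norm_smul, norm_smul, real_inner_smul_left,
    real_inner_smul_right, Real.norm_eq_abs, Real.norm_eq_abs, mul_pow, mul_pow, sq_abs, sq_abs]
  ring

theorem norm_sub_one_sub_smul_add_smul_sq_le {x y p : E} {L t : ℝ} (ht : t ∈ Set.Icc (0 : ℝ) 1)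
    (hx : ‖p - x‖ ≤ L * t) (hy : ‖p - y‖ ≤ L * (1 - t)) :
    ‖p - ((1 - t) • x + t • y)‖ ^ 2 ≤ t * (1 - t) * (L ^ 2 - ‖x - y‖ ^ 2) := by
  obtain ⟨ht0, ht1⟩ := ht
  have hsplit : p - ((1 - t) • x + t • y) = (1 - t) • (p - x) + t • (p - y) := by module
  have hdiff : (p - x) - (p - y) = -(x - y) := by abel
  have hx2 : ‖p - x‖ ^ 2 ≤ (L * t) ^ 2 := pow_le_pow_left₀ (norm_nonneg _) hx 2
  have hy2 : ‖p - y‖ ^ 2 ≤ (L * (1 - t)) ^ 2 := pow_le_pow_left₀ (norm_nonneg _) hy 2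
  rw [hsplit, norm_one_sub_smul_add_smul_sq, hdiff, norm_neg]
  calc (1 - t) * ‖p - x‖ ^ 2 + t * ‖p - y‖ ^ 2 - t * (1 - t) * ‖x - y‖ ^ 2
      ≤ (1 - t) * (L * t) ^ 2 + t * (L * (1 - t)) ^ 2 - t * (1 - t) * ‖x - y‖ ^ 2 := by
        gcongr
    _ = t * (1 - t) * (L ^ 2 - ‖x - y‖ ^ 2) := by ring

end InnerProductSpace

theorem path_deviation_pointwise {N : ℕ} (x y : EuclideanSpace ℝ (Fin N)) (L : ℝ)
    (γ : ℝ → EuclideanSpace ℝ (Fin N)) (h0 : γ 0 = x) (h1 : γ 1 = y)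
    (hlip : ∀ s ∈ Set.Icc (0:ℝ) 1, ∀ t ∈ Set.Icc (0:ℝ) 1, ‖γ s - γ t‖ ≤ L * |s - t|) :
    ∀ t ∈ Set.Icc (0:ℝ) 1,
      ‖γ t - ((1 - t) • x + t • y)‖ ^ 2 ≤ t * (1 - t) * (L ^ 2 - ‖x - y‖ ^ 2) := by
  intro t ht
  have hx : ‖γ t - x‖ ≤ L * t := by
    simpa [h0, abs_of_nonneg ht.1] using hlip t ht 0 (Set.left_mem_Icc.2 zero_le_one)
  have hy : ‖γ t - y‖ ≤ L * (1 - t) := by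
    simpa [h1, abs_sub_comm t, abs_of_nonneg (sub_nonneg.2 ht.2)] using
      hlip t ht 1 (Set.right_mem_Icc.2 zero_le_one)
  exact norm_sub_one_sub_smul_add_smul_sq_le ht hx hy
end

section
/- Let x, y ∈ ℝ^N with x ≠ y, let L ≥ ‖x-y‖, and let γ : [0,1] → ℝ^N satisfy γ(0) = x, γ(1) = y, ‖γ(t) - x‖ ≤ Lt and ‖γ(t) - y‖ ≤ L(1-t) for all t ∈ [0,1]. Let γ̄(t) = (1-t)x + ty. Then ∫₀¹ ‖γ(t) - γ̄(t)‖ dt ≤ (1/√6)·√(L² - ‖x-y‖²). -/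
/-!
Writing `γ̄(t) = (1 - t) x + t y`, the identity
`‖p - γ̄(t)‖² = (1 - t) ‖p - x‖² + t ‖p - y‖² - t (1 - t) ‖x - y‖²` together with the two
distance constraints gives `‖γ(t) - γ̄(t)‖² ≤ t (1 - t) (L² - ‖x - y‖²)`. Jensen's inequality for
the square root on the probability space `(0, 1]` then bounds the mean deviation by the square
root of the mean of this bound, and `∫₀¹ t (1 - t) dt = 1 / 6`.
-/

open MeasureTheory Set

section ConvexCombination

variable {E : Type*} [NormedAddCommGroup E] [InnerProductSpace ℝ E]

theorem norm_sub_convex_combination_sq (p x y : E) (t : ℝ) :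
    ‖p - ((1 - t) • x + t • y)‖ ^ 2
      = (1 - t) * ‖p - x‖ ^ 2 + t * ‖p - y‖ ^ 2 - t * (1 - t) * ‖x - y‖ ^ 2 := by
  have hcomb : p - ((1 - t) • x + t • y) = (1 - t) • (p - x) + t • (p - y) := by module
  have hdiff : x - y = (p - y) - (p - x) := by abel
  rw [hcomb, hdiff, norm_add_sq_real, norm_sub_sq_real (p - y), norm_smul, norm_smul,
    real_inner_smul_left, real_inner_smul_right, real_inner_comm (p - x)]
  simp only [Real.norm_eq_abs, mul_pow, sq_abs]
  ring

theorem norm_sub_convex_combination_sq_le {p x y : E} {L t : ℝ} (ht₀ : 0 ≤ t) (ht₁ : t ≤ 1)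
    (hx : ‖p - x‖ ≤ L * t) (hy : ‖p - y‖ ≤ L * (1 - t)) :
    ‖p - ((1 - t) • x + t • y)‖ ^ 2 ≤ t * (1 - t) * (L ^ 2 - ‖x - y‖ ^ 2) := by
  have hx2 := pow_le_pow_left₀ (norm_nonneg _) hx 2
  have hy2 := pow_le_pow_left₀ (norm_nonneg _) hy 2
  rw [norm_sub_convex_combination_sq]
  nlinarith [mul_le_mul_of_nonneg_left hx2 (sub_nonneg.2 ht₁), mul_le_mul_of_nonneg_left hy2 ht₀]

end ConvexCombination

theorem integral_le_sqrt_integral_of_sq_le {α : Type*} [MeasurableSpace α] {μ : Measure α}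
    [IsProbabilityMeasure μ] {f g : α → ℝ} (hg : Integrable g μ)
    (hfg : ∀ᵐ a ∂μ, f a ^ 2 ≤ g a) :
    ∫ a, f a ∂μ ≤ √(∫ a, g a ∂μ) := by
  by_cases hf : Integrable f μ
  swap
  · rw [integral_undef hf]
    positivity
  have hf2 : Integrable (fun a => f a ^ 2) μ :=
    hg.mono' (hf.aestronglyMeasurable.pow 2) (hfg.mono fun a h => by simpa using h)
  have hsqrt : (fun a => √(f a ^ 2)) = fun a => |f a| := funext fun a => Real.sqrt_sq_eq_abs _
  calc ∫ a, f a ∂μ ≤ ∫ a, √(f a ^ 2) ∂μ := by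
        rw [hsqrt]
        exact integral_mono hf hf.abs fun a => le_abs_self _
    _ ≤ √(∫ a, f a ^ 2 ∂μ) :=
        Real.strictConcaveOn_sqrt.concaveOn.le_map_integral Real.continuous_sqrt.continuousOn
          isClosed_Ici (ae_of_all _ fun a => sq_nonneg (f a)) hf2
          (by simpa only [Function.comp_def, hsqrt] using hf.abs)
    _ ≤ √(∫ a, g a ∂μ) := Real.sqrt_le_sqrt (integral_mono_ae hf2 hg hfg)

theorem integral_mul_one_sub_self : ∫ t in (0 : ℝ)..1, t * (1 - t) = 1 / 6 := by
  simp only [mul_one_sub, ← sq]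
  rw [intervalIntegral.integral_sub intervalIntegral.intervalIntegrable_id (intervalIntegral.intervalIntegrable_pow 2),
    integral_id, integral_pow]
  norm_num

theorem path_deviation_L1_general {N : ℕ} (x y : EuclideanSpace ℝ (Fin N)) (L : ℝ)
    (γ : ℝ → EuclideanSpace ℝ (Fin N))
    (hx : ∀ t ∈ Set.Icc (0:ℝ) 1, ‖γ t - x‖ ≤ L * t)
    (hy : ∀ t ∈ Set.Icc (0:ℝ) 1, ‖γ t - y‖ ≤ L * (1 - t)) :
    ∫ t in (0:ℝ)..1, ‖γ t - ((1 - t) • x + t • y)‖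
      ≤ (1 / Real.sqrt 6) * Real.sqrt (L ^ 2 - ‖x - y‖ ^ 2) := by
  set C := L ^ 2 - ‖x - y‖ ^ 2
  have : IsProbabilityMeasure (volume.restrict (Ioc (0 : ℝ) 1)) := ⟨by simp⟩
  have hbound : ∀ t ∈ Ioc (0 : ℝ) 1, ‖γ t - ((1 - t) • x + t • y)‖ ^ 2 ≤ t * (1 - t) * C :=
    fun t ht => norm_sub_convex_combination_sq_le ht.1.le ht.2
      (hx t (Ioc_subset_Icc_self ht)) (hy t (Ioc_subset_Icc_self ht))
  have hpoly : Integrable (fun t : ℝ => t * (1 - t) * C) (volume.restrict (Ioc 0 1)) :=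
    (by fun_prop : Continuous fun t : ℝ => t * (1 - t) * C).integrableOn_Ioc
  rw [intervalIntegral.integral_of_le zero_le_one]
  calc _ ≤ √(∫ t in Ioc (0 : ℝ) 1, t * (1 - t) * C) :=
        integral_le_sqrt_integral_of_sq_le hpoly
          ((ae_restrict_iff' measurableSet_Ioc).2 (ae_of_all _ hbound))
    _ = _ := by
        rw [← intervalIntegral.integral_of_le zero_le_one, intervalIntegral.integral_mul_const,
          integral_mul_one_sub_self, Real.sqrt_mul (by norm_num), Real.sqrt_div' _ (by norm_num),
          Real.sqrt_one]

theorem path_deviation_L1 {N : ℕ} (x y : EuclideanSpace ℝ (Fin N)) (hxy : x ≠ y) (L : ℝ)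
    (hL : ‖x - y‖ ≤ L) (γ : ℝ → EuclideanSpace ℝ (Fin N)) (h0 : γ 0 = x) (h1 : γ 1 = y)
    (hx : ∀ t ∈ Set.Icc (0:ℝ) 1, ‖γ t - x‖ ≤ L * t)
    (hy : ∀ t ∈ Set.Icc (0:ℝ) 1, ‖γ t - y‖ ≤ L * (1 - t)) :
    ∫ t in (0:ℝ)..1, ‖γ t - ((1 - t) • x + t • y)‖
      ≤ (1 / Real.sqrt 6) * Real.sqrt (L ^ 2 - ‖x - y‖ ^ 2) :=
  path_deviation_L1_general x y L γ hx hy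
end

section
/- Let B be a binomial random variable with parameters n ∈ ℕ and p ∈ (0,1). Then for every real k with k > np, P(B ≥ k) ≤ exp( k·(1 + log(np/k) - np/k) ). -/
/-!
Exponential Markov: for every `t ≥ 0`, `P(B ≥ k) ≤ e^{-tk} E[e^{tB}] = e^{-tk} (p e^t + 1 - p)^n`,
and `1 + x ≤ e^x` bounds this by `exp (np (e^t - 1) - tk)`. The choice `e^t = k / (np)`,
admissible because `k > np`, turns the exponent into `k (1 + log (np/k) - np/k)`.
-/

open Real Finset

theorem sum_ite_le_exp_neg_mul_sum_exp_mul {ι : Type*} (s : Finset ι) {w : ι → ℝ}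
    (hw : ∀ i ∈ s, 0 ≤ w i) (x : ι → ℝ) (k : ℝ) {t : ℝ} (ht : 0 ≤ t) :
    ∑ i ∈ s, (if k ≤ x i then w i else 0) ≤ exp (-(t * k)) * ∑ i ∈ s, exp (t * x i) * w i := by
  rw [mul_sum]
  refine sum_le_sum fun i hi => ?_
  rw [← mul_assoc, ← exp_add]
  split_ifs with hki
  · have : 0 ≤ -(t * k) + t * x i := by nlinarith
    exact le_mul_of_one_le_left (hw i hi) (one_le_exp this)
  · exact mul_nonneg (exp_pos _).le (hw i hi)

theorem sum_range_exp_mul_binomial (n : ℕ) (p t : ℝ) :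
    ∑ i ∈ range (n + 1), exp (t * i) * ((n.choose i : ℝ) * p ^ i * (1 - p) ^ (n - i))
      = (p * exp t + (1 - p)) ^ n := by
  rw [add_pow]
  refine sum_congr rfl fun i _ => ?_
  rw [mul_comm t, exp_nat_mul, mul_pow]
  ring

theorem bernoulli_mgf_pow_le_exp (n : ℕ) {p : ℝ} (hp0 : 0 ≤ p) (hp1 : p ≤ 1) (t : ℝ) :
    (p * exp t + (1 - p)) ^ n ≤ exp (n * p * (exp t - 1)) := by
  have hbase : p * exp t + (1 - p) ≤ exp (p * (exp t - 1)) := by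
    linarith [add_one_le_exp (p * (exp t - 1))]
  calc (p * exp t + (1 - p)) ^ n ≤ exp (p * (exp t - 1)) ^ n :=
        pow_le_pow_left₀ (by nlinarith [exp_pos t]) hbase n
    _ = exp (n * p * (exp t - 1)) := by rw [← exp_nat_mul, mul_assoc]

theorem binomial_tail_le_exp (n : ℕ) {p : ℝ} (hp0 : 0 ≤ p) (hp1 : p ≤ 1) (k : ℝ) {t : ℝ}
    (ht : 0 ≤ t) :
    (∑ i ∈ range (n + 1), if k ≤ (i : ℝ) then (n.choose i : ℝ) * p ^ i * (1 - p) ^ (n - i) else 0)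
      ≤ exp (n * p * (exp t - 1) - t * k) := by
  have hw : ∀ i ∈ range (n + 1), 0 ≤ (n.choose i : ℝ) * p ^ i * (1 - p) ^ (n - i) :=
    fun i _ => mul_nonneg (by positivity) (pow_nonneg (sub_nonneg.mpr hp1) _)
  calc _ ≤ exp (-(t * k)) * (p * exp t + (1 - p)) ^ n := by
        rw [← sum_range_exp_mul_binomial]
        exact sum_ite_le_exp_neg_mul_sum_exp_mul _ hw _ k ht
    _ ≤ exp (-(t * k)) * exp (n * p * (exp t - 1)) :=
        mul_le_mul_of_nonneg_left (bernoulli_mgf_pow_le_exp n hp0 hp1 t) (exp_pos _).le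
    _ = exp (n * p * (exp t - 1) - t * k) := by rw [← exp_add]; ring_nf

theorem chernoff_exponent_at_log_div {μ k : ℝ} (hμ : 0 < μ) (hk : 0 < k) :
    μ * (exp (log (k / μ)) - 1) - log (k / μ) * k = k * (1 + log (μ / k) - μ / k) := by
  rw [exp_log (div_pos hk hμ), ← inv_div, log_inv]
  field_simp
  ring

theorem binomial_upper_tail_chernoff (n : ℕ) (p : ℝ) (hp0 : 0 < p) (hp1 : p < 1)
    (k : ℝ) (hk : (n : ℝ) * p < k) :
    (∑ i ∈ Finset.range (n + 1),
        if k ≤ (i : ℝ) then (n.choose i : ℝ) * p ^ i * (1 - p) ^ (n - i) else 0)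
      ≤ Real.exp (k * (1 + Real.log ((n : ℝ) * p / k) - (n : ℝ) * p / k)) := by
  rcases Nat.eq_zero_or_pos n with rfl | hn
  · simp only [Nat.cast_zero, zero_mul] at hk
    rw [sum_range_one, if_neg (by push_cast; linarith)]
    positivity
  have hμ : 0 < (n : ℝ) * p := mul_pos (by exact_mod_cast hn) hp0
  have ht : 0 ≤ log (k / (n * p)) := log_nonneg ((one_le_div hμ).mpr hk.le)
  rw [← chernoff_exponent_at_log_div hμ (hμ.trans hk)]
  exact binomial_tail_le_exp n hp0.le hp1.le k ht
end

section
/- Let B be a binomial random variable with parameters n ∈ ℕ and p ∈ (0,1). Then for every real k with 0 < k < np, P(B ≤ k) ≤ exp( k·(1 + log(np/k) - np/k) ). -/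
/-!
Exponential Markov inequality with parameter `r = k / (n p) < 1`: on the event `i ≤ k` the weight
`r ^ (i - k)` is at least `1`, so the lower tail is at most `r ^ (-k)` times the probability
generating function `(1 - p + p r) ^ n ≤ exp (n p (r - 1))`. With this choice of `r` the bound
`r ^ (-k) exp (n p (r - 1))` is exactly `exp (k (1 + log (n p / k) - n p / k))`.
-/

open Finset Real

lemma sum_ite_le_le_rpow_neg_mul_sum_pow_mul {s : Finset ℕ} {w : ℕ → ℝ}
    (hw : ∀ i ∈ s, 0 ≤ w i) {r : ℝ} (hr0 : 0 < r) (hr1 : r ≤ 1) (k : ℝ) :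
    ∑ i ∈ s, (if (i : ℝ) ≤ k then w i else 0) ≤ r ^ (-k) * ∑ i ∈ s, r ^ i * w i := by
  rw [mul_sum]
  refine sum_le_sum fun i hi => ?_
  split_ifs with hik
  · have hweight : r ^ (-k) * r ^ i = r ^ ((i : ℝ) - k) := by
      rw [sub_eq_neg_add, rpow_add hr0, rpow_natCast]
    have hone : 1 ≤ r ^ ((i : ℝ) - k) :=
      one_le_rpow_of_pos_of_le_one_of_nonpos hr0 hr1 (by linarith)
    calc w i = 1 * w i := (one_mul _).symm
      _ ≤ r ^ ((i : ℝ) - k) * w i := mul_le_mul_of_nonneg_right hone (hw i hi)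
      _ = r ^ (-k) * (r ^ i * w i) := by rw [← hweight, mul_assoc]
  · exact mul_nonneg (rpow_nonneg hr0.le _) (mul_nonneg (pow_nonneg hr0.le _) (hw i hi))

lemma sum_pow_mul_choose_mul_pow_mul_pow (n : ℕ) (p r : ℝ) :
    ∑ i ∈ range (n + 1), r ^ i * ((n.choose i : ℝ) * p ^ i * (1 - p) ^ (n - i)) =
      (1 + p * (r - 1)) ^ n := by
  rw [show 1 + p * (r - 1) = p * r + (1 - p) by ring, add_pow]
  exact sum_congr rfl fun i _ => by ring

lemma one_add_pow_le_exp_mul {x : ℝ} (hx : -1 ≤ x) (n : ℕ) : (1 + x) ^ n ≤ exp (n * x) := by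
  rw [exp_nat_mul]
  exact pow_le_pow_left₀ (by linarith) (by linarith [add_one_le_exp x]) n

lemma binomial_lower_tail_le_rpow_neg_mul_exp (n : ℕ) {p : ℝ} (hp0 : 0 ≤ p) (hp1 : p ≤ 1)
    {r : ℝ} (hr0 : 0 < r) (hr1 : r ≤ 1) (k : ℝ) :
    ∑ i ∈ range (n + 1), (if (i : ℝ) ≤ k then (n.choose i : ℝ) * p ^ i * (1 - p) ^ (n - i) else 0)
      ≤ r ^ (-k) * exp (n * (p * (r - 1))) := by
  have hq : 0 ≤ 1 - p := by linarith
  calc _ ≤ r ^ (-k) * ∑ i ∈ range (n + 1),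
          r ^ i * ((n.choose i : ℝ) * p ^ i * (1 - p) ^ (n - i)) :=
        sum_ite_le_le_rpow_neg_mul_sum_pow_mul (fun i _ => by positivity) hr0 hr1 k
    _ = r ^ (-k) * (1 + p * (r - 1)) ^ n := by rw [sum_pow_mul_choose_mul_pow_mul_pow]
    _ ≤ r ^ (-k) * exp (n * (p * (r - 1))) :=
        mul_le_mul_of_nonneg_left (one_add_pow_le_exp_mul (by nlinarith) n)
          (rpow_nonneg hr0.le _)

lemma rpow_neg_mul_exp_eq_of_mul_eq {N k r : ℝ} (hk0 : 0 < k) (hr0 : 0 < r) (hNr : N * r = k) :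
    r ^ (-k) * exp (N * (r - 1)) = exp (k * (1 + log (N / k) - N / k)) := by
  have hN : N = k / r := by field_simp; linarith
  subst hN
  rw [rpow_def_of_pos hr0, ← exp_add, div_div_cancel_left' hk0.ne', log_inv]
  congr 1
  field_simp
  ring

theorem binomial_lower_tail_chernoff_general (n : ℕ) (p : ℝ) (hp1 : p < 1)
    (k : ℝ) (hk0 : 0 < k) (hk : k < (n : ℝ) * p) :
    (∑ i ∈ Finset.range (n + 1),
        if (i : ℝ) ≤ k then (n.choose i : ℝ) * p ^ i * (1 - p) ^ (n - i) else 0)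
      ≤ Real.exp (k * (1 + Real.log ((n : ℝ) * p / k) - (n : ℝ) * p / k)) := by
  have hN0 : 0 < (n : ℝ) * p := hk0.trans hk
  have hp0 : 0 < p := pos_of_mul_pos_right hN0 n.cast_nonneg
  set r := k / ((n : ℝ) * p)
  have hr0 : 0 < r := div_pos hk0 hN0
  have hr1 : r ≤ 1 := ((div_lt_one hN0).2 hk).le
  calc _ ≤ r ^ (-k) * exp (n * (p * (r - 1))) :=
        binomial_lower_tail_le_rpow_neg_mul_exp n hp0.le hp1.le hr0 hr1 k
    _ = r ^ (-k) * exp ((n * p) * (r - 1)) := by rw [mul_assoc]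
    _ = _ := rpow_neg_mul_exp_eq_of_mul_eq hk0 hr0 (mul_div_cancel₀ k hN0.ne')

theorem binomial_lower_tail_chernoff (n : ℕ) (p : ℝ) (hp0 : 0 < p) (hp1 : p < 1)
    (k : ℝ) (hk0 : 0 < k) (hk : k < (n : ℝ) * p) :
    (∑ i ∈ Finset.range (n + 1),
        if (i : ℝ) ≤ k then (n.choose i : ℝ) * p ^ i * (1 - p) ^ (n - i) else 0)
      ≤ Real.exp (k * (1 + Real.log ((n : ℝ) * p / k) - (n : ℝ) * p / k)) :=
  binomial_lower_tail_chernoff_general n p hp1 k hk0 hk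
end

section
/- Let γ : [0, L] → ℝ^N be an arc-length parameterized C¹ curve (‖γ'(t)‖ = 1 for all t), and suppose there exists τ > 0 such that the angle between γ'(t) and γ'(s) is at most |t-s|/τ for all t, s ∈ [0,L]. Then for every t₀ ∈ [0,L] and δ ∈ (0, (π/2)τ] with t₀ + δ ≤ L, the angle between the chord γ(t₀+δ) - γ(t₀) and the tangent γ'(t₀) satisfies ∠(γ(t₀+δ) - γ(t₀), γ'(t₀)) ≤ δ/(2τ). -/
/-!
Compare `γ` with a circle of radius `τ` traversed at unit speed. By the angle hypothesis, at time
`t₀ + s` the component of `γ'` along `T = γ' t₀` is at least `cos (s / τ)` and its component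
orthogonal to `T` is at most `sin (s / τ)`. Integrating these differential inequalities, the chord
`γ (t₀ + δ) - γ t₀` has tangential component `P ≥ τ sin (δ / τ)` and normal component
`Q ≤ τ (1 - cos (δ / τ))`, so its angle with `T` has tangent at most
`Q / P ≤ (1 - cos 2x) / sin 2x = tan x` with `x = δ / (2τ)`, the chord–tangent angle of the
circle.
-/

open InnerProductGeometry Real Set

open scoped RealInnerProductSpace

section RightTriangle

variable {V : Type*} [NormedAddCommGroup V] [InnerProductSpace ℝ V]

theorem norm_sub_inner_smul_eq_sin_angle {u T : V} (hu : ‖u‖ = 1) (hT : ‖T‖ = 1) :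
    ‖u - ⟪u, T⟫ • T‖ = sin (angle u T) := by
  have hsq : ‖u - ⟪u, T⟫ • T‖ ^ 2 = sin (angle u T) ^ 2 := by
    rw [sin_sq, ← inner_eq_cos_angle_of_norm_eq_one hu hT, norm_sub_sq_real,
      real_inner_smul_right, norm_smul, hu, hT, Real.norm_eq_abs, mul_one, sq_abs]
    ring
  exact (pow_left_inj₀ (norm_nonneg _) (sin_angle_nonneg u T) two_ne_zero).1 hsq

theorem cos_le_inner_of_angle_le {u T : V} {θ : ℝ} (hu : ‖u‖ = 1) (hT : ‖T‖ = 1)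
    (h : angle u T ≤ θ) (hθ : θ ≤ π) : cos θ ≤ ⟪u, T⟫ := by
  rw [inner_eq_cos_angle_of_norm_eq_one hu hT]
  exact cos_le_cos_of_nonneg_of_le_pi (angle_nonneg u T) hθ h

theorem norm_sub_inner_smul_le_sin_of_angle_le {u T : V} {θ : ℝ} (hu : ‖u‖ = 1)
    (hT : ‖T‖ = 1) (h : angle u T ≤ θ) (hθ : θ ≤ π / 2) : ‖u - ⟪u, T⟫ • T‖ ≤ sin θ := by
  rw [norm_sub_inner_smul_eq_sin_angle hu hT]
  exact sin_le_sin_of_le_of_le_pi_div_two (by linarith [angle_nonneg u T, pi_pos]) hθ h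

theorem angle_le_of_norm_sub_inner_smul_le {c T : V} {x : ℝ} (hT : ‖T‖ = 1)
    (hP : 0 < ⟪c, T⟫) (hx : x ∈ Ioo (-(π / 2)) (π / 2))
    (h : ‖c - ⟪c, T⟫ • T‖ ≤ ⟪c, T⟫ * tan x) : angle c T ≤ x := by
  set P := ⟪c, T⟫
  have horth : ⟪P • T, c - P • T⟫ = 0 := by
    rw [real_inner_smul_left, inner_sub_right, real_inner_smul_right,
      real_inner_self_eq_norm_sq, hT, real_inner_comm]
    ring
  have hPT : P • T ≠ 0 := smul_ne_zero hP.ne' (norm_ne_zero_iff.1 (hT ▸ one_ne_zero))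
  have hangle : angle c T = angle (P • T) (P • T + (c - P • T)) := by
    rw [add_sub_cancel, angle_smul_left_of_pos _ _ hP, angle_comm]
  have htan : tan (angle c T) ≤ tan x := by
    rw [hangle, tan_angle_add_of_inner_eq_zero horth, norm_smul, hT, mul_one,
      Real.norm_eq_abs, abs_of_pos hP, div_le_iff₀ hP, mul_comm]
    exact h
  have hlt : angle c T < π / 2 :=
    hangle ▸ angle_add_lt_pi_div_two_of_inner_eq_zero horth hPT
  exact (strictMonoOn_tan.le_iff_le ⟨by linarith [angle_nonneg c T], hlt⟩ hx).1 htan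

end RightTriangle

theorem one_sub_cos_two_mul_eq_sin_two_mul_mul_tan {x : ℝ} (hx : cos x ≠ 0) :
    1 - cos (2 * x) = sin (2 * x) * tan x := by
  rw [cos_two_mul, sin_two_mul, tan_eq_sin_div_cos, cos_sq']
  field_simp
  ring

section ModelArc

variable {a τ : ℝ}

theorem hasDerivAt_mul_sin_sub_div (hτ : τ ≠ 0) (t : ℝ) :
    HasDerivAt (fun s => τ * sin ((s - a) / τ)) (cos ((t - a) / τ)) t := by
  refine ((((hasDerivAt_id t).sub_const a).div_const τ).sin.const_mul τ).congr_deriv ?_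
  simp only [id]
  field_simp

theorem hasDerivAt_mul_one_sub_cos_sub_div (hτ : τ ≠ 0) (t : ℝ) :
    HasDerivAt (fun s => τ * (1 - cos ((s - a) / τ))) (sin ((t - a) / τ)) t := by
  refine ((((hasDerivAt_id t).sub_const a).div_const τ).cos.const_sub 1 |>.const_mul τ)
    |>.congr_deriv ?_
  simp only [id]
  field_simp

end ModelArc

section Comparison

variable {E : Type*} [NormedAddCommGroup E] [InnerProductSpace ℝ E]
  {γ γ' : ℝ → E} {T : E} {a b τ : ℝ}

theorem mul_sin_le_inner_sub (hab : a ≤ b) (hτ : τ ≠ 0)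
    (hderiv : ∀ t ∈ Icc a b, HasDerivAt γ (γ' t) t)
    (hcos : ∀ t ∈ Ico a b, cos ((t - a) / τ) ≤ ⟪γ' t, T⟫) :
    τ * sin ((b - a) / τ) ≤ ⟪γ b - γ a, T⟫ := by
  have hB : ∀ t ∈ Icc a b, HasDerivAt (fun s => ⟪γ s - γ a, T⟫) ⟪γ' t, T⟫ t := by
    intro t ht
    simpa using ((hderiv t ht).sub_const (γ a)).inner ℝ (hasDerivAt_const t T)
  refine image_le_of_deriv_right_le_deriv_boundary
    (fun t _ => (hasDerivAt_mul_sin_sub_div hτ t).continuousAt.continuousWithinAt)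
    (fun t _ => (hasDerivAt_mul_sin_sub_div hτ t).hasDerivWithinAt) (by simp)
    (fun t ht => (hB t ht).continuousAt.continuousWithinAt)
    (fun t ht => (hB t (Ico_subset_Icc_self ht)).hasDerivWithinAt) hcos ⟨hab, le_rfl⟩

theorem norm_sub_inner_smul_sub_le_mul_one_sub_cos (hab : a ≤ b) (hτ : τ ≠ 0)
    (hderiv : ∀ t ∈ Icc a b, HasDerivAt γ (γ' t) t)
    (hsin : ∀ t ∈ Ico a b, ‖γ' t - ⟪γ' t, T⟫ • T‖ ≤ sin ((t - a) / τ)) :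
    ‖(γ b - γ a) - ⟪γ b - γ a, T⟫ • T‖ ≤ τ * (1 - cos ((b - a) / τ)) := by
  have hf : ∀ t ∈ Icc a b, HasDerivAt (fun s => (γ s - γ a) - ⟪γ s - γ a, T⟫ • T)
      (γ' t - ⟪γ' t, T⟫ • T) t := fun t ht => by
    have hd := (hderiv t ht).sub_const (γ a)
    exact (hd.sub ((hd.inner ℝ (hasDerivAt_const t T)).smul_const T)).congr_deriv (by simp)
  refine image_norm_le_of_norm_deriv_right_le_deriv_boundary
    (fun t ht => (hf t ht).continuousAt.continuousWithinAt)
    (fun t ht => (hf t (Ico_subset_Icc_self ht)).hasDerivWithinAt) (by simp)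
    (hasDerivAt_mul_one_sub_cos_sub_div hτ) hsin ⟨hab, le_rfl⟩

end Comparison

theorem chord_tangent_angle_bound {N : ℕ} (L τ : ℝ) (hτ : 0 < τ)
    (γ γ' : ℝ → EuclideanSpace ℝ (Fin N))
    (hderiv : ∀ t ∈ Set.Icc (0:ℝ) L, HasDerivAt γ (γ' t) t)
    (hunit : ∀ t ∈ Set.Icc (0:ℝ) L, ‖γ' t‖ = 1)
    (hangle : ∀ t ∈ Set.Icc (0:ℝ) L, ∀ s ∈ Set.Icc (0:ℝ) L,
      angle (γ' t) (γ' s) ≤ |t - s| / τ) :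
    ∀ t₀ ∈ Set.Icc (0:ℝ) L, ∀ δ : ℝ, 0 < δ → δ ≤ Real.pi / 2 * τ → t₀ + δ ≤ L →
      angle (γ (t₀ + δ) - γ t₀) (γ' t₀) ≤ δ / (2 * τ) := by
  intro t₀ ht₀ δ hδ hδτ hL
  have hsub : Icc t₀ (t₀ + δ) ⊆ Icc 0 L := Icc_subset_Icc ht₀.1 hL
  have hsub' : Ico t₀ (t₀ + δ) ⊆ Icc 0 L := Ico_subset_Icc_self.trans hsub
  have htwo : (t₀ + δ - t₀) / τ = 2 * (δ / (2 * τ)) := by field_simp; ring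
  have hxπ : δ / (2 * τ) ≤ π / 4 := by rw [div_le_iff₀ (by positivity)]; linarith
  have hx0 : 0 < δ / (2 * τ) := by positivity
  set x := δ / (2 * τ)
  have hθ : ∀ t ∈ Ico t₀ (t₀ + δ),
      angle (γ' t) (γ' t₀) ≤ (t - t₀) / τ ∧ (t - t₀) / τ ≤ π / 2 :=
    fun t ht => ⟨abs_of_nonneg (sub_nonneg.2 ht.1) ▸ hangle t (hsub' ht) t₀ ht₀,
      by rw [div_le_iff₀ hτ]; linarith [ht.2]⟩
  have hP := mul_sin_le_inner_sub (by linarith) hτ.ne' (fun t ht => hderiv t (hsub ht))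
    fun t ht => cos_le_inner_of_angle_le (hunit t (hsub' ht)) (hunit t₀ ht₀) (hθ t ht).1
      (by linarith [(hθ t ht).2, pi_pos])
  have hQ := norm_sub_inner_smul_sub_le_mul_one_sub_cos (by linarith) hτ.ne'
    (fun t ht => hderiv t (hsub ht))
    fun t ht => norm_sub_inner_smul_le_sin_of_angle_le (hunit t (hsub' ht)) (hunit t₀ ht₀)
      (hθ t ht).1 (hθ t ht).2
  rw [htwo] at hP hQ
  have hsin : 0 < sin (2 * x) := sin_pos_of_pos_of_lt_pi (by linarith) (by linarith)
  refine angle_le_of_norm_sub_inner_smul_le (hunit t₀ ht₀) ((mul_pos hτ hsin).trans_le hP)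
    ⟨by linarith, by linarith⟩ ?_
  calc _ ≤ τ * (1 - cos (2 * x)) := hQ
    _ = τ * sin (2 * x) * tan x := by
      rw [one_sub_cos_two_mul_eq_sin_two_mul_mul_tan
        (cos_pos_of_mem_Ioo ⟨by linarith, by linarith⟩).ne', mul_assoc]
    _ ≤ _ := mul_le_mul_of_nonneg_right hP
      (tan_nonneg_of_nonneg_of_le_pi_div_two hx0.le (by linarith))
end
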